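/- arXiv:1703.07456 — 3 statements merged into one kernel-verified Lean document; each statement's English description precedes it below -/
import Mathlib

section
/- Let N = (a_1, ..., a_s) be a tuple of positive integers with p = p(N) ≥ 2, where p(N) = max{ j : Σ_{a_i ≤ j}(j+1-a_i) ≤ j }. If no a_i satisfies a_i ≤ p-1 and at most one a_i satisfies a_i ≤ p, then for every integer b ≥ 2 one has p(N+b) = p, where N+b is the tuple obtained by appending b to N. -/
/-!
Appending `b` changes the excess at `j` only by the extra term `j + 1 - b` (when `b ≤ j`), so the
admissible set can only shrink. It still contains `p`: all entries are at least `p` and at most one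
equals `p`, so the excess of `N` at `p` is at most `1`, and the extra term is at most `p - 1`
because `b ≥ 2`.
-/

open Finset

namespace Nat

theorem isGreatest_sSup_of_ne_zero {S : Set ℕ} (hS : sSup S ≠ 0) : IsGreatest S (sSup S) := by
  have hbdd : BddAbove S := by
    by_contra h
    exact hS (Nat.sSup_of_not_bddAbove h)
  have hne : S.Nonempty := by
    rw [Set.nonempty_iff_ne_empty]
    rintro rfl
    exact hS csSup_empty
  exact ⟨Nat.sSup_mem hne hbdd, fun _ hj => le_csSup hbdd hj⟩

end Nat

/-- `p(N)` is the largest `j` with `excess N j ≤ j`. -/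
def excess {ι : Type*} [Fintype ι] (a : ι → ℕ) (j : ℕ) : ℕ :=
  ∑ i ∈ univ.filter (fun i => a i ≤ j), (j + 1 - a i)

theorem excess_snoc {s : ℕ} (a : Fin s → ℕ) (b j : ℕ) :
    excess (Fin.snoc a b : Fin (s + 1) → ℕ) j = excess a j + if b ≤ j then j + 1 - b else 0 := by
  simp [excess, sum_filter, Fin.sum_univ_castSucc]

theorem excess_le_card_of_le {ι : Type*} [Fintype ι] {a : ι → ℕ} {j : ℕ} (h : ∀ i, j ≤ a i) :
    excess a j ≤ #(univ.filter fun i => a i ≤ j) := by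
  rw [card_eq_sum_ones]
  exact sum_le_sum fun i _ => by have := h i; omega

theorem stmt_4_general (s : ℕ) (a : Fin s → ℕ)
    (p : ℕ) (hp : p = sSup {j : ℕ | ∑ i ∈ Finset.univ.filter (fun i => a i ≤ j), (j + 1 - a i) ≤ j})
    (hp2 : 2 ≤ p)
    (h1 : ∀ i, ¬ a i ≤ p - 1)
    (h2 : (Finset.univ.filter (fun i => a i ≤ p)).card ≤ 1)
    (b : ℕ) (hb : 2 ≤ b)
    (a' : Fin (s + 1) → ℕ) (ha' : a' = Fin.snoc a b) :
    sSup {j : ℕ | ∑ i ∈ Finset.univ.filter (fun i => a' i ≤ j), (j + 1 - a' i) ≤ j} = p := by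
  subst ha'
  change sSup {j | excess (Fin.snoc a b : Fin (s + 1) → ℕ) j ≤ j} = p
  change p = sSup {j | excess a j ≤ j} at hp
  have hmax : IsGreatest {j | excess a j ≤ j} p := by
    rw [hp]
    exact Nat.isGreatest_sSup_of_ne_zero (by omega)
  have hexcess : excess a p ≤ 1 :=
    (excess_le_card_of_le fun i => by have := h1 i; omega).trans h2
  refine IsGreatest.csSup_eq ⟨?_, fun j hj => hmax.2 ?_⟩
  · change excess _ p ≤ p
    rw [excess_snoc]
    split <;> omega
  · change excess _ j ≤ j at hj
    rw [excess_snoc] at hj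
    exact (Nat.le_add_right _ _).trans hj

theorem stmt_4 (s : ℕ) (hs : 1 ≤ s) (a : Fin s → ℕ) (ha : ∀ i, 0 < a i)
    (p : ℕ) (hp : p = sSup {j : ℕ | ∑ i ∈ Finset.univ.filter (fun i => a i ≤ j), (j + 1 - a i) ≤ j})
    (hp2 : 2 ≤ p)
    (h1 : ∀ i, ¬ a i ≤ p - 1)
    (h2 : (Finset.univ.filter (fun i => a i ≤ p)).card ≤ 1)
    (b : ℕ) (hb : 2 ≤ b)
    (a' : Fin (s + 1) → ℕ) (ha' : a' = Fin.snoc a b) :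
    sSup {j : ℕ | ∑ i ∈ Finset.univ.filter (fun i => a' i ≤ j), (j + 1 - a' i) ≤ j} = p :=
  stmt_4_general s a p hp hp2 h1 h2 b hb a' ha'
end

section
/- Let s ≥ 4 and t ≥ s be integers with s odd, consider the tuple with s+1 entries consisting of one entry equal to s (playing the role of b = s) and s entries equal to t, i.e. n_j' counts entries ≤ j where the entries are (s, t, t, ..., t) with t repeated s times. Then q := max{ j : n_0' + ... + n_j' ≤ j } equals t - 1, and moreover n_{q+1}' = s + 1 = q + 2 - (n_0' + ... + n_q'). -/
/-!
For the tuple `(b, t, …, t)` with `k` copies of `t`, the counting function is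
`n j = [b ≤ j] + k·[t ≤ j]`, so `∑_{m < N} n m = (N - b) + k (N - t)`. For `j < t` this partial
sum up to `j` is `j + 1 - b ≤ j`; from `j = t` on, the `k ≥ b` entries equal to `t` push it
past `j`. Hence `q = t - 1`, and everything else is read off the two formulas at `N = t`.
-/

open Finset

lemma sum_range_ite_le (c N k : ℕ) :
    ∑ m ∈ range N, (if c ≤ m then k else 0) = (N - c) * k := by
  rw [sum_ite, sum_const_zero, add_zero, sum_const, smul_eq_mul, range_eq_Ico, Ico_filter_le,
    Nat.card_Ico, max_eq_right (Nat.zero_le c)]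

lemma card_filter_cons_const_le (b t j k : ℕ) :
    #{i | (Fin.cons b (fun _ => t) : Fin (k + 1) → ℕ) i ≤ j} =
      (if b ≤ j then 1 else 0) + (if t ≤ j then k else 0) := by
  rw [card_filter, Fin.sum_univ_succ]
  by_cases htj : t ≤ j <;> simp [htj]

lemma sum_range_card_filter_cons_const_le (b t k N : ℕ) :
    ∑ m ∈ range N, #{i | (Fin.cons b (fun _ => t) : Fin (k + 1) → ℕ) i ≤ m} =
      (N - b) + (N - t) * k := by
  simp only [card_filter_cons_const_le, sum_add_distrib, sum_range_ite_le, mul_one]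

lemma sum_range_succ_card_filter_cons_const_le_iff {b t k j : ℕ}
    (hb : 0 < b) (hbk : b ≤ k) (hbt : b ≤ t) :
    ∑ m ∈ range (j + 1), #{i | (Fin.cons b (fun _ => t) : Fin (k + 1) → ℕ) i ≤ m} ≤ j ↔
      j < t := by
  rw [sum_range_card_filter_cons_const_le]
  constructor
  · intro h
    by_contra! htj
    have : k ≤ (j + 1 - t) * k := Nat.le_mul_of_pos_left k (by omega)
    omega
  · intro h
    rw [Nat.sub_eq_zero_of_le h, zero_mul]
    omega

lemma Nat.sSup_Iio {t : ℕ} (ht : 0 < t) : sSup (Set.Iio t) = t - 1 :=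
  IsGreatest.csSup_eq ⟨by simp [ht], fun j hj => by simp at hj; omega⟩

theorem stmt_6_general (s t : ℕ) (hs : 4 ≤ s) (hts : s ≤ t)
    (a : Fin (s + 1) → ℕ) (ha : a = Fin.cons s (fun _ => t))
    (n : ℕ → ℕ) (hn : ∀ j, n j = (Finset.univ.filter (fun i => a i ≤ j)).card)
    (q : ℕ) (hq : q = sSup {j : ℕ | ∑ m ∈ Finset.range (j + 1), n m ≤ j}) :
    q = t - 1 ∧ n (q + 1) = s + 1 ∧
      q + 2 - ∑ m ∈ Finset.range (q + 1), n m = s + 1 := by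
  subst ha
  simp only [hn] at hq ⊢
  have hset : {j : ℕ | ∑ m ∈ range (j + 1), _ ≤ j} = Set.Iio t := Set.ext fun j =>
    sum_range_succ_card_filter_cons_const_le_iff (by omega) le_rfl hts
  have hqt : q = t - 1 := by rw [hq, hset, Nat.sSup_Iio (by omega)]
  have hq1 : q + 1 = t := by omega
  refine ⟨hqt, ?_, ?_⟩
  · rw [hq1, card_filter_cons_const_le, if_pos hts, if_pos le_rfl]
    omega
  · rw [hq1, sum_range_card_filter_cons_const_le, Nat.sub_self, zero_mul]
    omega

theorem stmt_6 (s t : ℕ) (hs : 4 ≤ s) (hodd : Odd s) (hts : s ≤ t)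
    (a : Fin (s + 1) → ℕ) (ha : a = Fin.cons s (fun _ => t))
    (n : ℕ → ℕ) (hn : ∀ j, n j = (Finset.univ.filter (fun i => a i ≤ j)).card)
    (q : ℕ) (hq : q = sSup {j : ℕ | ∑ m ∈ Finset.range (j + 1), n m ≤ j}) :
    q = t - 1 ∧ n (q + 1) = s + 1 ∧
      q + 2 - ∑ m ∈ Finset.range (q + 1), n m = s + 1 :=
  stmt_6_general s t hs hts a ha n hn q hq
end

section
/- Let s ≥ 4, t ≥ 3, and 3 ≤ b ≤ t be integers, and consider the tuple consisting of one entry b and s copies of t, so n_j counts entries at most j. Let α = max{ j ≥ 0 : j·s ≤ b - 1 } and p = max{ j : n_0 + ... + n_j ≤ j }. Then p = t + α - 1, n_0 + ... + n_p = t - b + α(s+1), and p + 2 - (n_0 + ... + n_p) = b - αs + 1. -/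
/-!
Summing `n_m = #{i | a i ≤ m}` over `m ≤ j` swaps into `∑ i, (j + 1 - a i)`, so for the tuple
`(b, t, …, t)` the partial sum is `(j + 1 - b) + (j + 1 - t) s`. This is `≤ j` exactly when
`(j + 1 - t) s ≤ b - 1`, i.e. when `j + 1 - t ≤ α = (b - 1) / s`; hence the set defining `p` is
the initial segment `[0, t + α - 1]`, and the two remaining identities are arithmetic.
-/

open Finset

theorem sum_range_card_filter_le {ι : Type*} [Fintype ι] (a : ι → ℕ) (N : ℕ) :
    ∑ m ∈ range N, #{i | a i ≤ m} = ∑ i, (N - a i) := by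
  simp_rw [card_filter]
  rw [sum_comm]
  refine sum_congr rfl fun i _ => ?_
  rw [← card_filter, range_eq_Ico, Ico_filter_le, Nat.card_Ico, Nat.zero_max]

theorem Nat.sSup_setOf_mul_le {s : ℕ} (hs : 0 < s) (c : ℕ) :
    sSup {j : ℕ | j * s ≤ c} = c / s := by
  simp_rw [← Nat.le_div_iff_mul_le hs]
  exact csSup_Iic

theorem Nat.sub_add_sub_mul_le_iff {s t b : ℕ} (hs : 0 < s) (hb : 1 ≤ b) (hbt : b ≤ t)
    (j : ℕ) : (j + 1 - b) + (j + 1 - t) * s ≤ j ↔ j ≤ t + (b - 1) / s - 1 := by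
  have hdiv : j + 1 - t ≤ (b - 1) / s ↔ (j + 1 - t) * s ≤ b - 1 := Nat.le_div_iff_mul_le hs
  generalize (b - 1) / s = α at hdiv ⊢
  rcases Nat.lt_or_ge j t with hjt | hjt
  · have hzero : j + 1 - t = 0 := by omega
    simp only [hzero, zero_mul]
    omega
  · omega

theorem stmt_7_general (s t b : ℕ) (hs : 4 ≤ s) (hb : 3 ≤ b) (hbt : b ≤ t)
    (a : Fin (s + 1) → ℕ) (ha : a = Fin.cons b (fun _ => t))
    (n : ℕ → ℕ) (hn : ∀ j, n j = (Finset.univ.filter (fun i => a i ≤ j)).card)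
    (α : ℕ) (hα : α = sSup {j : ℕ | j * s ≤ b - 1})
    (p : ℕ) (hp : p = sSup {j : ℕ | ∑ m ∈ Finset.range (j + 1), n m ≤ j}) :
    p = t + α - 1 ∧
    (∑ m ∈ Finset.range (p + 1), n m = t - b + α * (s + 1)) ∧
    p + 2 - ∑ m ∈ Finset.range (p + 1), n m = b - α * s + 1 := by
  have hs0 : 0 < s := by omega
  have hsum (j : ℕ) : ∑ m ∈ range (j + 1), n m = (j + 1 - b) + (j + 1 - t) * s := by
    simp_rw [hn, sum_range_card_filter_le, ha, Fin.sum_univ_succ]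
    simp [mul_comm]
  have hα' : α = (b - 1) / s := hα.trans (Nat.sSup_setOf_mul_le hs0 _)
  have hαs : α * s ≤ b - 1 := hα' ▸ Nat.div_mul_le_self _ _
  have hp' : p = t + α - 1 := by
    simp_rw [hp, hsum, Nat.sub_add_sub_mul_le_iff hs0 (by omega) hbt, ← hα']
    exact csSup_Iic
  have hsum_p : ∑ m ∈ range (p + 1), n m = t - b + α * (s + 1) := by
    rw [hsum, hp', show t + α - 1 + 1 - t = α by omega, mul_add_one]
    omega
  exact ⟨hp', hsum_p, by rw [hsum_p, hp', mul_add_one]; omega⟩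

theorem stmt_7 (s t b : ℕ) (hs : 4 ≤ s) (ht : 3 ≤ t) (hb : 3 ≤ b) (hbt : b ≤ t)
    (a : Fin (s + 1) → ℕ) (ha : a = Fin.cons b (fun _ => t))
    (n : ℕ → ℕ) (hn : ∀ j, n j = (Finset.univ.filter (fun i => a i ≤ j)).card)
    (α : ℕ) (hα : α = sSup {j : ℕ | j * s ≤ b - 1})
    (p : ℕ) (hp : p = sSup {j : ℕ | ∑ m ∈ Finset.range (j + 1), n m ≤ j}) :
    p = t + α - 1 ∧
    (∑ m ∈ Finset.range (p + 1), n m = t - b + α * (s + 1)) ∧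
    p + 2 - ∑ m ∈ Finset.range (p + 1), n m = b - α * s + 1 :=
  stmt_7_general s t b hs hb hbt a ha n hn α hα p hp
end
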